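/- arXiv:1909.01588 — 12 statements merged into one kernel-verified Lean document; each statement's English description precedes it below -/
import Mathlib

section
/- If X is kℓ-large in a group G and H ≤ G is a subgroup of index k, then X ∩ H is ℓ-large in H. -/
open Pointwise

def IsKLarge {G : Type*} [Group G] (k : ℕ) (X : Set G) : Prop :=
  ∀ g : Fin k → G, (⋂ i, (g i) • X).Nonempty

theorem stmt_5 {G : Type*} [Group G] (k l : ℕ) (hk : 0 < k) (hl : 0 < l)
    (H : Subgroup G) (hH : H.index = k) (X : Set G)
    (hX : IsKLarge (k * l) X) :
    IsKLarge l ((fun h : H => (h : G)) ⁻¹' X) := by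
  intro g
  have hcard : Nat.card (G ⧸ H) = k := hH
  have : Finite (G ⧸ H) := Nat.finite_of_card_ne_zero (by omega)
  let e : G ⧸ H ≃ Fin k := Finite.equivFinOfCardEq hcard
  let t : Fin k → G := fun j => Quotient.out (s := QuotientGroup.leftRel H) (e.symm j)
  obtain ⟨y, hy⟩ := hX fun m =>
    t (finProdFinEquiv.symm m).1 * (g (finProdFinEquiv.symm m).2 : G)
  have key : ∀ (j : Fin k) (i : Fin l), (t j * (g i : G))⁻¹ * y ∈ X := by
    intro j i
    have h1 := Set.mem_iInter.1 hy (finProdFinEquiv (j, i))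
    simp only [Equiv.symm_apply_apply] at h1
    rwa [Set.mem_smul_set_iff_inv_smul_mem, smul_eq_mul] at h1
  set j0 := e (QuotientGroup.mk y) with hj0
  have ht : (t j0)⁻¹ * y ∈ H := by
    have h2 : ((t j0 : G) : G ⧸ H) = QuotientGroup.mk y := by
      simp only [t, hj0, Equiv.symm_apply_apply]; exact Quotient.out_eq _
    exact (QuotientGroup.eq).1 h2
  refine ⟨⟨(t j0)⁻¹ * y, ht⟩, ?_⟩
  rw [Set.mem_iInter]
  intro i
  rw [Set.mem_smul_set_iff_inv_smul_mem, smul_eq_mul]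
  show ((((g i)⁻¹ * ⟨(t j0)⁻¹ * y, ht⟩ : H) : G)) ∈ X
  have : (((g i)⁻¹ * ⟨(t j0)⁻¹ * y, ht⟩ : H) : G) = (t j0 * (g i : G))⁻¹ * y := by
    push_cast
    group
  rw [this]
  exact key j0 i
end

section
/- Let G be a finite group of order n and X a nonempty proper subset of size m. If m > n − 1/2 − √(n − 3/4), then X is 2-generic (i.e., G is the union of two left translates of X). -/
open Pointwise

theorem stmt_7 {G : Type*} [Group G] [Fintype G] (X : Set G)
    (hne : X.Nonempty) (hproper : X ≠ Set.univ)
    (h : (Nat.card X : ℝ) > (Fintype.card G : ℝ) - 1/2 - Real.sqrt ((Fintype.card G : ℝ) - 3/4)) :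
    ∃ g₁ g₂ : G, g₁ • X ∪ g₂ • X = Set.univ := by
  classical
  set n := Fintype.card G with hn
  set Xf : Finset G := X.toFinset with hXf
  set Yf : Finset G := Xfᶜ with hYf
  have hm : Nat.card X = Xf.card := by
    rw [Nat.card_coe_set_eq, Set.ncard_eq_toFinset_card']
  set m := Xf.card with hmdef
  set k := Yf.card with hk
  have hkY : k = n - m := by
    simp [hk, hYf, Finset.card_compl, hn, hmdef]
  have hmn : m < n := by
    have : Xf ≠ Finset.univ := by
      intro hEq
      apply hproper
      rw [Set.eq_univ_iff_forall]
      intro x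
      have : x ∈ Xf := hEq ▸ Finset.mem_univ x
      simpa [hXf, Set.mem_toFinset] using this
    have := Finset.card_lt_card (Finset.lt_iff_ssubset.mp
      (lt_of_le_of_ne (Finset.le_iff_subset.mpr (Finset.subset_univ _)) this))
    simpa [hn] using this
  have hk1 : 1 ≤ k := by omega
  set T : Finset G := (Yf ×ˢ Yf).image (fun p : G × G => p.1 * p.2⁻¹) with hT
  by_cases hTuniv : T = Finset.univ
  · -- derive contradiction
    exfalso
    have hsub : T ⊆ insert 1 (Yf.offDiag.image (fun p : G × G => p.1 * p.2⁻¹)) := by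
      intro g hg
      rw [hT, Finset.mem_image] at hg
      obtain ⟨p, hp, hpg⟩ := hg
      rw [Finset.mem_product] at hp
      by_cases hd : p.1 = p.2
      · simp [← hpg, hd]
      · exact Finset.mem_insert_of_mem (Finset.mem_image.mpr
          ⟨p, Finset.mem_offDiag.mpr ⟨hp.1, hp.2, hd⟩, hpg⟩)
    have hcard : n ≤ 1 + (k * k - k) := by
      calc n = T.card := by rw [hTuniv]; simp [hn]
        _ ≤ (insert 1 (Yf.offDiag.image (fun p : G × G => p.1 * p.2⁻¹))).card :=
            Finset.card_le_card hsub
        _ ≤ 1 + Yf.offDiag.card := by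
            have := Finset.card_insert_le (1:G) (Yf.offDiag.image (fun p : G × G => p.1 * p.2⁻¹))
            have h2 := Finset.card_image_le (s := Yf.offDiag) (f := fun p : G × G => p.1 * p.2⁻¹)
            omega
        _ = 1 + (k * k - k) := by rw [Finset.offDiag_card]
    -- real arithmetic contradiction
    have hkR : (k : ℝ) = (n : ℝ) - (m : ℝ) := by
      rw [hkY]; push_cast [Nat.cast_sub (le_of_lt hmn)]; ring
    have hnR : (n : ℝ) ≤ (k : ℝ) * k - k + 1 := by
      have : (n : ℝ) ≤ 1 + ((k * k - k : ℕ) : ℝ) := by exact_mod_cast hcard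
      have hkk : ((k * k - k : ℕ) : ℝ) = (k : ℝ) * k - k := by
        rw [Nat.cast_sub (Nat.le_mul_of_pos_left k (by omega))]; push_cast; ring
      linarith [this, hkk.le, hkk.ge]
    have hn1 : (1 : ℝ) ≤ n := by
      have : 0 < n := Fintype.card_pos
      exact_mod_cast this
    set s := Real.sqrt ((n : ℝ) - 3/4) with hs
    have hs0 : 0 ≤ s := Real.sqrt_nonneg _
    have hs2 : s ^ 2 = (n : ℝ) - 3/4 := Real.sq_sqrt (by linarith)
    have hkR1 : (1 : ℝ) ≤ k := by exact_mod_cast hk1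
    have hmR : (m : ℝ) > (n : ℝ) - 1/2 - s := by
      rw [hs]; rw [hm] at h; exact h
    nlinarith [hmR, hkR, hnR, hs2, hkR1, hs0]
  · obtain ⟨g, hg⟩ : ∃ g, g ∉ T := by
      by_contra hc
      push_neg at hc
      exact hTuniv (Finset.eq_univ_iff_forall.mpr hc)
    refine ⟨1, g⁻¹, ?_⟩
    rw [Set.eq_univ_iff_forall]
    intro x
    by_cases hx : x ∈ X
    · left; simpa using hx
    · right
      rw [Set.mem_smul_set_iff_inv_smul_mem]
      by_contra hgx
      apply hg
      rw [hT, Finset.mem_image]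
      refine ⟨(g * x, x), ?_, by group⟩
      rw [Finset.mem_product]
      constructor
      · simp only [hYf, Finset.mem_compl, hXf, Set.mem_toFinset]
        simpa using hgx
      · simp only [hYf, Finset.mem_compl, hXf, Set.mem_toFinset]
        exact hx
end

section
/- Let G be a finite group of order n whose exponent does not divide ℓ. Then the proportion of elements g ∈ G with g^ℓ = 1 is at most 1 − 1/√(2n). -/
open Pointwise

theorem stmt_8 {G : Type*} [Group G] [Fintype G] (l : ℕ) (hl : 0 < l)
    (h : ∃ g : G, g ^ l ≠ 1) :
    (Nat.card {g : G // g ^ l = 1} : ℝ) / (Fintype.card G : ℝ) ≤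
      1 - 1 / Real.sqrt (2 * (Fintype.card G : ℝ)) := by
  classical
  obtain ⟨t, ht⟩ := h
  set n := Fintype.card G with hn
  set T : Finset G := Finset.univ.filter (fun x => ¬ x ^ l = 1) with hT
  set S : Finset G := Finset.univ.filter (fun x => x ^ l = 1) with hS
  have hST : S.card + T.card = n := Finset.card_filter_add_card_filter_not _
  have hk : Nat.card {g : G // g ^ l = 1} = S.card := by
    rw [Nat.card_eq_fintype_card, Fintype.card_subtype]
  set m := T.card with hm
  have htT : t ∈ T := by simp [hT, ht]
  have hm1 : 1 ≤ m := Finset.card_pos.mpr ⟨t, htT⟩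
  -- the commuting elements
  set C : Finset G := Finset.univ.filter (fun x => Commute x t) with hC
  -- commuting solutions inject into T via x ↦ x * t
  have hCS : (C.filter (fun x => x ^ l = 1)).card ≤ m := by
    apply Finset.card_le_card_of_injOn (fun x => x * t)
    · intro x hx
      simp only [hC, Finset.mem_coe, Finset.mem_filter, Finset.mem_univ, true_and] at hx
      simp only [hT, Finset.mem_coe, Finset.mem_filter, Finset.mem_univ, true_and]
      intro hxl
      apply ht
      have hcomm : (x * t) ^ l = x ^ l * t ^ l := hx.1.mul_pow l
      rw [hx.2, one_mul] at hcomm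
      rw [← hcomm, hxl]
    · intro a _ b _ hab
      exact mul_right_cancel hab
  have hC2m : C.card ≤ 2 * m := by
    have := Finset.card_filter_add_card_filter_not
      (s := C) (p := fun x => x ^ l = 1)
    have h2 : (C.filter (fun x => ¬ x ^ l = 1)).card ≤ m := by
      apply Finset.card_le_card
      intro x hx
      simp only [Finset.mem_filter] at hx
      simp [hT, hx.2]
    omega
  -- conjugation map
  set φ : G → G := fun g => g * t * g⁻¹ with hφ
  have himg : Finset.univ.image φ ⊆ T := by
    intro y hy
    obtain ⟨g, _, rfl⟩ := Finset.mem_image.mp hy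
    simp only [hT, Finset.mem_filter, Finset.mem_univ, true_and, hφ]
    intro hyl
    apply ht
    rw [conj_pow] at hyl
    have : g⁻¹ * (g * t ^ l * g⁻¹) * g = g⁻¹ * 1 * g := by rw [hyl]
    simpa [mul_assoc] using this
  -- fibers of φ have size ≤ C.card
  have hfiber : ∀ y ∈ Finset.univ.image φ,
      (Finset.univ.filter (fun g => φ g = y)).card ≤ C.card := by
    intro y hy
    obtain ⟨g0, _, hg0⟩ := Finset.mem_image.mp hy
    apply Finset.card_le_card_of_injOn (fun g => g0⁻¹ * g)
    · intro g hg
      simp only [Finset.mem_coe, Finset.mem_filter, Finset.mem_univ, true_and] at hg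
      simp only [hC, Finset.mem_coe, Finset.mem_filter, Finset.mem_univ, true_and]
      have E : g * t * g⁻¹ = g0 * t * g0⁻¹ := hg.trans hg0.symm
      show g0⁻¹ * g * t = t * (g0⁻¹ * g)
      calc g0⁻¹ * g * t = g0⁻¹ * (g * t * g⁻¹) * g := by group
        _ = g0⁻¹ * (g0 * t * g0⁻¹) * g := by rw [E]
        _ = t * (g0⁻¹ * g) := by group
    · intro a _ b _ hab
      exact mul_left_cancel hab
  -- the key inequality n ≤ 2 * m ^ 2
  have hkey : n ≤ 2 * m ^ 2 := by
    have hsum : (Finset.univ : Finset G).card =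
        ∑ y ∈ Finset.univ.image φ, (Finset.univ.filter (fun g => φ g = y)).card :=
      Finset.card_eq_sum_card_fiberwise (fun x _ => Finset.mem_image_of_mem φ (Finset.mem_univ x))
    have hle : ∑ y ∈ Finset.univ.image φ, (Finset.univ.filter (fun g => φ g = y)).card
        ≤ (Finset.univ.image φ).card * C.card := by
      calc ∑ y ∈ Finset.univ.image φ, (Finset.univ.filter (fun g => φ g = y)).card
          ≤ ∑ y ∈ Finset.univ.image φ, C.card := Finset.sum_le_sum hfiber
        _ = (Finset.univ.image φ).card * C.card := by rw [Finset.sum_const, smul_eq_mul]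
    have himgcard : (Finset.univ.image φ).card ≤ m := Finset.card_le_card himg
    have : n ≤ m * (2 * m) := by
      calc n = (Finset.univ : Finset G).card := (Finset.card_univ).symm
        _ ≤ (Finset.univ.image φ).card * C.card := hsum ▸ hle
        _ ≤ m * (2 * m) := Nat.mul_le_mul himgcard hC2m
    nlinarith
  -- now the real-number computation
  have hn0 : 0 < n := Fintype.card_pos
  have hn0' : (0:ℝ) < n := by exact_mod_cast hn0
  have hSn : (S.card : ℝ) = (n : ℝ) - m := by
    have : S.card = n - m := by omega
    rw [this]
    push_cast [Nat.cast_sub (by omega : m ≤ n)]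
    ring
  rw [hk, hSn]
  have hs0 : (0:ℝ) < Real.sqrt (2 * n) := Real.sqrt_pos.mpr (by positivity)
  have hmain : (n : ℝ) ≤ m * Real.sqrt (2 * n) := by
    have h1 : (n:ℝ) = Real.sqrt ((n:ℝ)^2) := by
      rw [Real.sqrt_sq hn0'.le]
    have h2 : ((n:ℝ))^2 ≤ (m:ℝ)^2 * (2 * n) := by
      have : (n:ℝ) ≤ 2 * (m:ℝ)^2 := by exact_mod_cast hkey
      nlinarith
    calc (n:ℝ) = Real.sqrt ((n:ℝ)^2) := h1
      _ ≤ Real.sqrt ((m:ℝ)^2 * (2 * n)) := Real.sqrt_le_sqrt h2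
      _ = m * Real.sqrt (2 * n) := by
          rw [Real.sqrt_mul (sq_nonneg (m:ℝ)), Real.sqrt_sq (Nat.cast_nonneg (α := ℝ) m)]
  have hdiv : 1 / Real.sqrt (2 * n) ≤ (m : ℝ) / n := by
    rw [div_le_div_iff₀ hs0 hn0']
    linarith [hmain]
  have : ((n:ℝ) - m) / n = 1 - (m:ℝ)/n := by field_simp
  rw [this]
  linarith
end

section
/- Let G be a group, c ∈ G. If the set {x ∈ G : x² = c} is 4-large in G, then G is abelian of exponent 2 and c = 1. -/
open Pointwise

theorem stmt_9 {G : Type*} [Group G] (c : G)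
    (h : IsKLarge 4 {x : G | x ^ 2 = c}) :
    (∀ a b : G, a * b = b * a) ∧ (∀ x : G, x ^ 2 = 1) ∧ c = 1 := by
  have key : ∀ a b : G, ∃ y : G, y ^ 2 = c ∧ (a⁻¹ * y) ^ 2 = c ∧ (b⁻¹ * y) ^ 2 = c ∧
      ((a * b)⁻¹ * y) ^ 2 = c := by
    intro a b
    obtain ⟨y, hy⟩ := h ![1, a, b, a * b]
    simp only [Set.mem_iInter] at hy
    have h0 := hy 0
    have h1 := hy 1
    have h2 := hy 2
    have h3 := hy 3
    rw [Set.mem_smul_set_iff_inv_smul_mem] at h0 h1 h2 h3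
    simp only [Matrix.cons_val_zero, Matrix.cons_val_one, Matrix.head_cons, smul_eq_mul,
      Set.mem_setOf_eq] at h0 h1 h2 h3
    refine ⟨y, by simpa using h0, by simpa using h1, by simpa using h2, by simpa using h3⟩
  -- main algebraic fact: commutativity
  have comm : ∀ a b : G, a * b = b * a := by
    intro a b
    obtain ⟨y, h0, h1, h2, h3⟩ := key a b
    have conj : ∀ x : G, (x⁻¹ * y) ^ 2 = c → x * y = y * x⁻¹ := by
      intro x hx
      have e : x⁻¹ * y * (x⁻¹ * y) = y * y := by rw [← sq, ← sq, hx, h0]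
      rw [← mul_assoc] at e
      have e1 : x⁻¹ * y * x⁻¹ = y := mul_right_cancel e
      rw [eq_mul_inv_iff_mul_eq]
      calc x * y * x = x * (x⁻¹ * y * x⁻¹) * x := by rw [e1]
        _ = y := by group
    have ca := conj a h1
    have cb := conj b h2
    have cab := conj (a * b) h3
    have e : y * (a * b)⁻¹ = y * (a⁻¹ * b⁻¹) := by
      rw [← cab, mul_assoc, cb, ← mul_assoc, ca, mul_assoc]
    have e2 : (a * b)⁻¹ = a⁻¹ * b⁻¹ := mul_left_cancel e
    have e3 : b⁻¹ * a⁻¹ = a⁻¹ * b⁻¹ := by rw [← mul_inv_rev, e2]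
    calc a * b = (b⁻¹ * a⁻¹)⁻¹ := by group
      _ = (a⁻¹ * b⁻¹)⁻¹ := by rw [e3]
      _ = b * a := by group
  have sq1 : ∀ x : G, x ^ 2 = 1 := by
    intro x
    obtain ⟨y, h0, h1, -, -⟩ := key x 1
    have e : x⁻¹ * y * (x⁻¹ * y) = y * y := by rw [← sq, ← sq, h1, h0]
    rw [← mul_assoc] at e
    have e1 : x⁻¹ * y * x⁻¹ = y := mul_right_cancel e
    have e2 : x * y * x = y := by
      calc x * y * x = x * (x⁻¹ * y * x⁻¹) * x := by rw [e1]
        _ = y := by group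
    have e3 : x ^ 2 * y = 1 * y := by
      calc x ^ 2 * y = x * (x * y) := by rw [sq, mul_assoc]
        _ = x * (y * x) := by rw [comm x y]
        _ = x * y * x := (mul_assoc x y x).symm
        _ = y := e2
        _ = 1 * y := (one_mul y).symm
    exact mul_right_cancel e3
  refine ⟨comm, sq1, ?_⟩
  obtain ⟨y, h0, -, -, -⟩ := key 1 1
  rw [← h0]; exact sq1 y
end

section
/- Let G be a finite group and let a, b ∈ G be such that G is not abelian of exponent 2 or a ≠ b. Then the proportion of x ∈ G with xax = b is at most 3/4. -/
open Pointwise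

private lemma aux_comm {G : Type*} [Group G] (c y z : G)
    (hy : y * c * y = c) (hz : z * c * z = c) (hyz : y * z * c * (y * z) = c) :
    y * z = z * y := by
  have h1 : y * (z * c * z) * y = c := by rw [hz]; exact hy
  have h2 : y * z * c * (z * y) = c := by
    simp only [mul_assoc] at h1 ⊢; exact h1
  simp only [mul_assoc] at hyz h2
  exact mul_left_cancel (mul_left_cancel (mul_left_cancel (hyz.trans h2.symm)))

private lemma majority {G : Type*} [Group G] [Fintype G] (C : Finset G)
    (hmul : ∀ x ∈ C, ∀ y ∈ C, x * y⁻¹ ∈ C)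
    (hcard : Fintype.card G < 2 * C.card) : ∀ g : G, g ∈ C := by
  classical
  intro g
  by_contra hg
  have hdisj : Disjoint C (C.image (fun z => g * z)) := by
    rw [Finset.disjoint_right]
    intro t ht htc
    obtain ⟨z, hz, rfl⟩ := Finset.mem_image.mp ht
    exact hg (by simpa using hmul (g * z) htc z hz)
  have hle : (C ∪ C.image (fun z => g * z)).card ≤ Fintype.card G :=
    le_trans (Finset.card_le_univ _) (le_of_eq Finset.card_univ)
  rw [Finset.card_union_of_disjoint hdisj,
    Finset.card_image_of_injective _ (mul_right_injective g)] at hle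
  omega

theorem stmt_10 {G : Type*} [Group G] [Fintype G] (a b : G)
    (h : ¬ ((∀ x y : G, x * y = y * x) ∧ (∀ x : G, x ^ 2 = 1)) ∨ a ≠ b) :
    (Nat.card {x : G // x * a * x = b} : ℝ) / (Fintype.card G : ℝ) ≤ 3 / 4 := by
  classical
  by_contra hc
  push_neg at hc
  set n := Fintype.card G with hn
  have hn0 : 0 < n := Fintype.card_pos
  set S := Finset.univ.filter (fun x : G => x * a * x = b) with hSdef
  have hcard : Nat.card {x : G // x * a * x = b} = S.card := by
    rw [Nat.card_eq_fintype_card, Fintype.card_subtype]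
  rw [hcard] at hc
  have hkey : 3 * n < 4 * S.card := by
    have h4 : (0:ℝ) < 4 := by norm_num
    have hng : (0:ℝ) < (n:ℝ) := by exact_mod_cast hn0
    have h1 : (3:ℝ) * n < (S.card : ℝ) * 4 := (div_lt_div_iff₀ h4 hng).mp hc
    have h2 : 3 * n < S.card * 4 := by exact_mod_cast h1
    omega
  have hS0 : 0 < S.card := by omega
  obtain ⟨x₀, hx₀⟩ := Finset.card_pos.mp hS0
  have hx0 : x₀ * a * x₀ = b := (Finset.mem_filter.mp hx₀).2
  set T := Finset.univ.filter (fun y : G => y * (a * x₀) * y = a * x₀) with hTdef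
  have hmemT : ∀ y : G, y ∈ T ↔ y * (a * x₀) * y = a * x₀ := by
    intro y; simp [hTdef]
  have hmemS : ∀ x : G, x ∈ S ↔ x * a * x = b := by
    intro x; simp [hSdef]
  have hST : S.card = T.card := by
    refine Finset.card_bij' (fun x _ => x₀⁻¹ * x) (fun y _ => x₀ * y) ?_ ?_ ?_ ?_
    · intro x hx
      rw [hmemT]
      have hxx : x * a * x = x₀ * a * x₀ := ((hmemS x).mp hx).trans hx0.symm
      have : x₀⁻¹ * x * (a * x₀) * (x₀⁻¹ * x) = x₀⁻¹ * (x * a * x) := by group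
      rw [this, hxx]; group
    · intro y hy
      rw [hmemS]
      have hyy := (hmemT y).mp hy
      have : x₀ * y * a * (x₀ * y) = x₀ * (y * (a * x₀) * y) := by group
      rw [this, hyy, ← mul_assoc]
      exact hx0
    · intro x _; group
    · intro y _; group
  rw [hST] at hkey
  -- every element of T commutes with everything
  have hcomm1 : ∀ y ∈ T, ∀ w : G, y * w = w * y := by
    intro y hy
    set C := Finset.univ.filter (fun z : G => y * z = z * y) with hCdef
    have hmemC : ∀ z : G, z ∈ C ↔ y * z = z * y := by intro z; simp [hCdef]
    have hclosed : ∀ x ∈ C, ∀ z ∈ C, x * z⁻¹ ∈ C := by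
      intro x hx z hz
      rw [hmemC]
      have h1 : Commute y x := (hmemC x).mp hx
      have h2 : Commute y z := (hmemC z).mp hz
      exact (h1.mul_right h2.inv_right)
    set U := T ∩ T.image (fun t => y⁻¹ * t) with hUdef
    have hUC : U ⊆ C := by
      intro z hz
      rw [hUdef, Finset.mem_inter] at hz
      obtain ⟨hz1, hz2⟩ := hz
      obtain ⟨t, ht, hzt⟩ := Finset.mem_image.mp hz2
      have hyz : y * z ∈ T := by
        rw [← hzt]; rw [show y * (y⁻¹ * t) = t by group]; exact ht
      exact (hmemC z).mpr
        (aux_comm (a * x₀) y z ((hmemT y).mp hy) ((hmemT z).mp hz1) ((hmemT _).mp hyz))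
    have hUcard : T.card + T.card ≤ U.card + n := by
      have h1 := Finset.card_inter_add_card_union T (T.image (fun t => y⁻¹ * t))
      have h2 : (T ∪ T.image (fun t => y⁻¹ * t)).card ≤ n :=
        le_trans (Finset.card_le_univ _) (le_of_eq Finset.card_univ)
      have h3 : (T.image (fun t => y⁻¹ * t)).card = T.card :=
        Finset.card_image_of_injective _ (mul_right_injective y⁻¹)
      rw [← hUdef, h3] at h1
      omega
    have hCcard : n < 2 * C.card := by
      have := Finset.card_le_card hUC
      omega
    exact fun w => (hmemC w).mp (majority C hclosed hCcard w)
  -- G is abelian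
  have hab : ∀ u w : G, u * w = w * u := by
    set Z := Finset.univ.filter (fun z : G => ∀ w : G, z * w = w * z) with hZdef
    have hmemZ : ∀ z : G, z ∈ Z ↔ ∀ w : G, z * w = w * z := by intro z; simp [hZdef]
    have hclosed : ∀ x ∈ Z, ∀ z ∈ Z, x * z⁻¹ ∈ Z := by
      intro x hx z hz
      rw [hmemZ]
      intro w
      have h1 : Commute x w := (hmemZ x).mp hx w
      have h2 : Commute z w := (hmemZ z).mp hz w
      exact h1.mul_left h2.inv_left
    have hTZ : T ⊆ Z := fun y hy => (hmemZ y).mpr (hcomm1 y hy)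
    have hZcard : n < 2 * Z.card := by
      have := Finset.card_le_card hTZ
      omega
    exact fun u w => (hmemZ u).mp (majority Z hclosed hZcard u) w
  -- exponent 2
  have hexp : ∀ g : G, g * g = 1 := by
    set E := Finset.univ.filter (fun z : G => z * z = 1) with hEdef
    have hmemE : ∀ z : G, z ∈ E ↔ z * z = 1 := by intro z; simp [hEdef]
    have hclosed : ∀ x ∈ E, ∀ z ∈ E, x * z⁻¹ ∈ E := by
      intro x hx z hz
      rw [hmemE]
      have hx' := (hmemE x).mp hx
      have hz' : z⁻¹ * z⁻¹ = 1 := by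
        have : z⁻¹ = z := inv_eq_of_mul_eq_one_right ((hmemE z).mp hz)
        rw [this]; exact (hmemE z).mp hz
      calc x * z⁻¹ * (x * z⁻¹) = x * (z⁻¹ * x) * z⁻¹ := by group
        _ = x * (x * z⁻¹) * z⁻¹ := by rw [hab z⁻¹ x]
        _ = (x * x) * (z⁻¹ * z⁻¹) := by group
        _ = 1 := by rw [hx', hz', one_mul]
    have hTE : T ⊆ E := by
      intro y hy
      rw [hmemE]
      have hyT := (hmemT y).mp hy
      have h1 : y * y * (a * x₀) = a * x₀ := by
        calc y * y * (a * x₀) = y * (y * (a * x₀)) := by rw [mul_assoc]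
          _ = y * ((a * x₀) * y) := by rw [hab (a * x₀) y]
          _ = a * x₀ := by rw [← mul_assoc]; exact hyT
      have := h1.trans (one_mul (a * x₀)).symm
      exact mul_right_cancel this
    have hEcard : n < 2 * E.card := by
      have := Finset.card_le_card hTE
      omega
    exact fun g => (hmemE g).mp (majority E hclosed hEcard g)
  -- a = b
  have hab' : a = b := by
    rw [← hx0]
    calc a = a * (x₀ * x₀) := by rw [hexp x₀, mul_one]
      _ = (a * x₀) * x₀ := by rw [mul_assoc]
      _ = (x₀ * a) * x₀ := by rw [hab a x₀]
  rcases h with h | h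
  · exact h ⟨hab, fun x => by rw [sq]; exact hexp x⟩
  · exact h hab'
end

section
/- Let G be a 2-Engel group (i.e., [[x,y],y] = 1 for all x, y). If the set {x ∈ G : x³ = 1} is 2-large in G, then G has exponent 3. -/
open Pointwise

theorem stmt_12 {G : Type*} [Group G]
    (hEngel : ∀ x y : G, (x⁻¹ * y⁻¹ * x * y)⁻¹ * y⁻¹ * (x⁻¹ * y⁻¹ * x * y) * y = 1)
    (h : IsKLarge 2 {x : G | x ^ 3 = 1}) :
    ∀ x : G, x ^ 3 = 1 := by
  have comm_of : ∀ a b : G, a⁻¹ * b⁻¹ * a * b = 1 → a * b = b * a := by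
    intro a b hab
    have h2 : (b * a) * (a⁻¹ * b⁻¹ * a * b) = (b * a) * 1 := by rw [hab]
    simpa [mul_assoc] using h2
  -- Key: product of two 3-torsion elements is 3-torsion
  have key : ∀ s t : G, s ^ 3 = 1 → t ^ 3 = 1 → (t * s) ^ 3 = 1 := by
    intro s t hs ht
    set c := s⁻¹ * t⁻¹ * s * t with hc
    have hct : c * t = t * c := comm_of c t (hEngel s t)
    have hcs : c * s = s * c := by
      have h1 : Commute (t⁻¹ * s⁻¹ * t * s) s :=
        comm_of (t⁻¹ * s⁻¹ * t * s) s (hEngel t s)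
      have h4 : c = (t⁻¹ * s⁻¹ * t * s)⁻¹ := by rw [hc]; group
      rw [h4]
      exact h1.inv_left
    have hst : s * t = t * (s * c) := by rw [hc]; group
    have hcomm' : Commute s c := hcs.symm
    have hconj : t⁻¹ * s * (t⁻¹)⁻¹ = s * c := by rw [hc]; group
    have hc3 : c ^ 3 = 1 := by
      have e1 : (t⁻¹ * s * (t⁻¹)⁻¹) ^ 3 = t⁻¹ * s ^ 3 * (t⁻¹)⁻¹ := conj_pow ..
      have e2 : (s * c) ^ 3 = s ^ 3 * c ^ 3 := hcomm'.mul_pow 3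
      have e3 : t⁻¹ * s ^ 3 * (t⁻¹)⁻¹ = s ^ 3 * c ^ 3 := by rw [← e1, hconj, e2]
      rw [hs] at e3
      simpa using e3.symm
    -- now expand (t*s)^3
    have expand : (t * s) ^ 3 = t * (s * (t * (s * (t * s)))) := by
      rw [pow_succ, pow_succ, pow_one]; simp [mul_assoc]
    rw [expand]
    have r1 : ∀ x : G, s * (t * x) = t * (s * (c * x)) := by
      intro x; rw [← mul_assoc, hst]; simp [mul_assoc]
    have r2 : ∀ x : G, c * (t * x) = t * (c * x) := by
      intro x; rw [← mul_assoc, hct]; simp [mul_assoc]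
    have r3 : ∀ x : G, c * (s * x) = s * (c * x) := by
      intro x; rw [← mul_assoc, hcs]; simp [mul_assoc]
    calc t * (s * (t * (s * (t * s))))
        = t * (t * (s * (c * (s * (t * s))))) := by rw [r1]
      _ = t * (t * (s * (s * (c * (t * s))))) := by rw [r3]
      _ = t * (t * (s * (s * (t * (c * s))))) := by rw [r2]
      _ = t * (t * (s * (t * (s * (c * (c * s)))))) := by rw [r1 (c*s)]
      _ = t * (t * (t * (s * (c * (s * (c * (c * s))))))) := by rw [r1]
      _ = t * (t * (t * (s * (s * (c * (c * (c * s))))))) := by rw [r3]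
      _ = t * (t * (t * (s * (s * (c * (c * (s * c))))))) := by rw [hcs]
      _ = t * (t * (t * (s * (s * (c * (s * (c * c))))))) := by rw [r3]
      _ = t * (t * (t * (s * (s * (s * (c * (c * c))))))) := by rw [r3]
      _ = t ^ 3 * (s ^ 3 * c ^ 3) := by
          rw [pow_succ, pow_succ, pow_one, pow_succ, pow_succ, pow_one,
            pow_succ, pow_succ, pow_one]
          simp [mul_assoc]
      _ = 1 := by rw [hs, ht, hc3, one_mul, one_mul]
  intro x
  obtain ⟨t, ht⟩ := h ![x, 1]
  simp only [Set.mem_iInter] at ht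
  have h0 := ht 0
  have h1 := ht 1
  simp only [Matrix.cons_val_zero, Matrix.cons_val_one, Matrix.head_cons,
    Set.mem_smul_set_iff_inv_smul_mem, smul_eq_mul, Set.mem_setOf_eq,
    inv_one, one_mul] at h0 h1
  -- h0 : (x⁻¹ * t)^3 = 1, h1 : t^3 = 1
  have hs : ((x⁻¹ * t)⁻¹) ^ 3 = 1 := by
    rw [inv_pow, h0, inv_one]
  have := key ((x⁻¹ * t)⁻¹) t hs h1
  simpa [mul_assoc] using this
end

section
/- Let G be a group, g₁, ..., gₙ, c ∈ G. If the set {(x₁,...,xₙ) ∈ Gⁿ : [x₁,g₁]⋯[xₙ,gₙ] = c} is 2-large in Gⁿ, then each gᵢ is central in G and c = 1. -/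
open Pointwise

private lemma ofFn_update_eq_set {G : Type*} {n : ℕ} (f : Fin n → G) (j : Fin n) (v : G) :
    List.ofFn (Function.update f j v) = (List.ofFn f).set j v := by
  apply List.ext_getElem (by simp)
  intro i h1 h2
  simp only [List.getElem_ofFn, List.getElem_set, Function.update_apply, Fin.ext_iff]
  by_cases hij : i = (j : ℕ)
  · simp [hij]
  · simp [hij, Ne.symm hij]

private lemma entry_eq_of_prod_eq {G : Type*} [Group G] {n : ℕ} {f f' : Fin n → G} (j : Fin n)
    (hne : ∀ i, i ≠ j → f i = f' i)
    (hp : (List.ofFn f).prod = (List.ofFn f').prod) : f j = f' j := by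
  have hf' : f' = Function.update f j (f' j) := by
    funext i
    by_cases hi : i = j
    · subst hi; simp
    · simp [Function.update_apply, hi, hne i hi]
  have hf : List.ofFn f = (List.ofFn f).set j (f j) := by
    rw [← ofFn_update_eq_set, Function.update_eq_self]
  rw [hf', ofFn_update_eq_set, List.prod_set] at hp
  conv_lhs at hp => rw [hf, List.prod_set]
  simp only [List.length_ofFn, j.isLt, if_true, mul_assoc] at hp
  exact mul_right_cancel (mul_left_cancel hp)

theorem stmt_14 {G : Type*} [Group G] (n : ℕ) (g : Fin n → G) (c : G)
    (h : IsKLarge 2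
      {x : Fin n → G | (List.ofFn (fun i => (x i)⁻¹ * (g i)⁻¹ * (x i) * (g i))).prod = c}) :
    (∀ i, g i ∈ Subgroup.center G) ∧ c = 1 := by
  have hcent : ∀ j, g j ∈ Subgroup.center G := by
    intro j
    rw [Subgroup.mem_center_iff]
    intro a
    obtain ⟨y, hy⟩ := h ![1, Pi.mulSingle j a]
    simp only [Set.mem_iInter] at hy
    have h0 := hy 0
    have h1 := hy 1
    rw [show ((![1, Pi.mulSingle j a] : Fin 2 → Fin n → G) 0) = 1 from rfl, one_smul] at h0
    rw [show ((![1, Pi.mulSingle j a] : Fin 2 → Fin n → G) 1) = Pi.mulSingle j a from rfl,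
      Set.mem_smul_set_iff_inv_smul_mem] at h1
    set y' : Fin n → G := fun i => ((Pi.mulSingle j a : Fin n → G) i)⁻¹ * y i with hy'
    have h1 : y' ∈ {x : Fin n → G |
        (List.ofFn (fun i => (x i)⁻¹ * (g i)⁻¹ * (x i) * (g i))).prod = c} := h1
    have hyy' : ∀ i, i ≠ j → y' i = y i := by
      intro i hi
      show ((Pi.mulSingle j a : Fin n → G) i)⁻¹ * y i = y i
      rw [Pi.mulSingle_apply, if_neg hi]
      simp
    have hyj : y' j = a⁻¹ * y j := by
      show ((Pi.mulSingle j a : Fin n → G) j)⁻¹ * y j = a⁻¹ * y j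
      rw [Pi.mulSingle_eq_same]
    have hp0 : (List.ofFn (fun i => (y i)⁻¹ * (g i)⁻¹ * (y i) * (g i))).prod = c := h0
    have hp1 : (List.ofFn (fun i => (y' i)⁻¹ * (g i)⁻¹ * (y' i) * (g i))).prod = c := h1
    have hE : (y j)⁻¹ * (g j)⁻¹ * (y j) * (g j) = (y' j)⁻¹ * (g j)⁻¹ * (y' j) * (g j) :=
      entry_eq_of_prod_eq j (fun i hi => by rw [hyy' i hi]) (hp0.trans hp1.symm)
    rw [hyj] at hE
    have e1 := mul_right_cancel hE
    simp only [mul_inv_rev, inv_inv, mul_assoc] at e1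
    have e2 := mul_left_cancel e1
    have e3 := congrArg (· * (y j)⁻¹) e2
    simp only [mul_assoc, mul_inv_cancel, mul_one] at e3
    -- e3 : (g j)⁻¹ = a * ((g j)⁻¹ * a⁻¹)
    have e4 : a⁻¹ * (g j)⁻¹ = (g j)⁻¹ * a⁻¹ := by
      conv_lhs => rw [e3]
      simp [mul_assoc]
    have e5 := congrArg (·⁻¹) e4
    simp only [mul_inv_rev, inv_inv] at e5
    exact e5.symm
  refine ⟨hcent, ?_⟩
  obtain ⟨y, hy⟩ := h ![1, 1]
  simp only [Set.mem_iInter] at hy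
  have h0 := hy 0
  rw [show ((![1, 1] : Fin 2 → Fin n → G) 0) = 1 from rfl, one_smul] at h0
  have hp0 : (List.ofFn (fun i => (y i)⁻¹ * (g i)⁻¹ * (y i) * (g i))).prod = c := h0
  have hone : (fun i => (y i)⁻¹ * (g i)⁻¹ * (y i) * (g i)) = fun _ : Fin n => (1 : G) := by
    funext i
    have hc : y i * g i = g i * y i := (Subgroup.mem_center_iff.mp (hcent i)) (y i)
    rw [mul_assoc, hc]
    simp [mul_assoc]
  rw [hone] at hp0
  simp only [List.ofFn_const, List.prod_replicate, one_pow] at hp0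
  exact hp0.symm
end

section
/- Let G be a group and c ∈ G. If the set {(x,y) ∈ G² : [x,y] = c} is 4-large in G², then G is abelian and c = 1. -/
open Pointwise

theorem stmt_15 {G : Type*} [Group G] (c : G)
    (h : IsKLarge 4 {p : G × G | p.1⁻¹ * p.2⁻¹ * p.1 * p.2 = c}) :
    (∀ a b : G, a * b = b * a) ∧ c = 1 := by
  have key : ∀ a u v : G, (u⁻¹ * v⁻¹ * u * v = c) →
      ((a⁻¹*u)⁻¹ * v⁻¹ * (a⁻¹*u) * v = c) → Commute a v := by
    intro a u v e1 e2
    have E : u⁻¹ * (a * (v⁻¹ * (a⁻¹ * (u * v)))) = u⁻¹ * (v⁻¹ * (u * v)) := by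
      simpa [mul_assoc, mul_inv_rev] using e2.trans e1.symm
    have E2 := mul_left_cancel E
    have E2' : (a * (v⁻¹ * a⁻¹)) * (u * v) = v⁻¹ * (u * v) := by
      simpa [mul_assoc] using E2
    have E3 := mul_right_cancel E2'
    have E4 : Commute a v⁻¹ := by
      show a * v⁻¹ = v⁻¹ * a
      conv_rhs => rw [← E3]
      group
    simpa using E4.inv_right
  have mem_iff : ∀ (a b u v : G), (u, v) ∈ ((a, b) : G × G) • {p : G × G | p.1⁻¹ * p.2⁻¹ * p.1 * p.2 = c} ↔ (a⁻¹*u)⁻¹ * (b⁻¹*v)⁻¹ * (a⁻¹*u) * (b⁻¹*v) = c := by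
    intro a b u v
    rw [Set.mem_smul_set_iff_inv_smul_mem]
    rfl
  have comm : ∀ a b : G, a * b = b * a := by
    intro a b
    obtain ⟨⟨u, v⟩, hp⟩ := h ![(1,1), (a,1), (1,b), (a,b)]
    simp only [Set.mem_iInter] at hp
    have m0 := (mem_iff 1 1 u v).mp (hp 0)
    have m1 := (mem_iff a 1 u v).mp (hp 1)
    have m2 := (mem_iff 1 b u v).mp (hp 2)
    have m3 := (mem_iff a b u v).mp (hp 3)
    simp only [inv_one, one_mul] at m0 m1 m2 m3
    have k1 : Commute a v := key a u v m0 m1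
    have k2 : Commute a (b⁻¹ * v) := key a u (b⁻¹*v) m2 m3
    have k3 : Commute a b⁻¹ := by simpa [mul_assoc] using k2.mul_right k1.inv_right
    have k4 : Commute a b := by simpa using k3.inv_right
    exact k4
  refine ⟨comm, ?_⟩
  obtain ⟨⟨u, v⟩, hp⟩ := h ![(1,1), (1,1), (1,1), (1,1)]
  simp only [Set.mem_iInter] at hp
  have m0 := (mem_iff 1 1 u v).mp (hp 0)
  simp only [inv_one, one_mul] at m0
  rw [← m0]
  calc u⁻¹ * v⁻¹ * u * v = u⁻¹ * (v⁻¹ * u) * v := by group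
    _ = u⁻¹ * (u * v⁻¹) * v := by rw [comm v⁻¹ u]
    _ = 1 := by group
end

section
/- Let G be a finite group that is not abelian, or c ≠ 1. Then the proportion of pairs (x,y) ∈ G² with [x,y] = c is at most 3/4. -/
open Pointwise

lemma half_card_of_ne_top {G : Type*} [Group G] [Fintype G] (H : Subgroup G)
    (hH : H ≠ ⊤) : 2 * Nat.card H ≤ Fintype.card G := by
  have h1 : Nat.card H * H.index = Nat.card G := Subgroup.card_mul_index H
  have h2 : H.index ≠ 1 := fun hi => hH (Subgroup.index_eq_one.mp hi)
  have h3 : H.index ≠ 0 := Subgroup.index_ne_zero_of_finite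
  have h4 : 2 ≤ H.index := by omega
  calc 2 * Nat.card H ≤ H.index * Nat.card H := Nat.mul_le_mul_right _ h4
    _ = Nat.card G := by rw [mul_comm]; exact h1
    _ = Fintype.card G := Nat.card_eq_fintype_card

lemma comm_pairs_bound {G : Type*} [Group G] [Fintype G]
    (hna : ¬ ∀ a b : G, a * b = b * a) :
    4 * Nat.card {p : G × G // p.1 * p.2 = p.2 * p.1} ≤ 3 * Fintype.card G ^ 2 := by
  classical
  have key : Nat.card {p : G × G // p.1 * p.2 = p.2 * p.1}
      = ∑ x : G, Nat.card {y : G // x * y = y * x} := by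
    rw [Nat.card_congr (Equiv.subtypeProdEquivSigmaSubtype fun a b : G => a * b = b * a),
      Nat.card_eq_fintype_card, Fintype.card_sigma]
    exact Finset.sum_congr rfl fun x _ => (Nat.card_eq_fintype_card).symm
  -- center is proper
  have hZ : 2 * Nat.card (Subgroup.center G) ≤ Fintype.card G := by
    apply half_card_of_ne_top
    intro htop
    apply hna
    intro a b
    have ha : a ∈ Subgroup.center G := htop ▸ Subgroup.mem_top a
    exact (Subgroup.mem_center_iff.mp ha b).symm
  -- per-element bound
  have hper : ∀ x : G, 2 * Nat.card {y : G // x * y = y * x}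
      ≤ Fintype.card G + (if x ∈ Subgroup.center G then Fintype.card G else 0) := by
    intro x
    have hcong : Nat.card {y : G // x * y = y * x} = Nat.card (Subgroup.centralizer {x}) := by
      apply Nat.card_congr
      exact Equiv.subtypeEquivRight fun y => by
        rw [Subgroup.mem_centralizer_singleton_iff]; exact eq_comm
    by_cases hx : x ∈ Subgroup.center G
    · simp only [hx, if_pos]
      have : Nat.card {y : G // x * y = y * x} ≤ Fintype.card G := by
        rw [Nat.card_eq_fintype_card]
        exact Fintype.card_subtype_le _
      omega
    · simp only [hx, if_neg, not_false_iff, add_zero]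
      rw [hcong]
      apply half_card_of_ne_top
      intro htop
      apply hx
      rw [Subgroup.mem_center_iff]
      intro g
      have hg : g ∈ Subgroup.centralizer {x} := htop ▸ Subgroup.mem_top g
      exact Subgroup.mem_centralizer_singleton_iff.mp hg
  have hsum : 2 * ∑ x : G, Nat.card {y : G // x * y = y * x}
      ≤ Fintype.card G * Fintype.card G
        + Nat.card (Subgroup.center G) * Fintype.card G := by
    rw [Finset.mul_sum]
    calc ∑ x : G, 2 * Nat.card {y : G // x * y = y * x}
        ≤ ∑ x : G, (Fintype.card G + (if x ∈ Subgroup.center G then Fintype.card G else 0)) :=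
          Finset.sum_le_sum fun x _ => hper x
      _ = Fintype.card G * Fintype.card G
          + Nat.card (Subgroup.center G) * Fintype.card G := by
          rw [Finset.sum_add_distrib, Finset.sum_const, Finset.card_univ, smul_eq_mul,
            ← Finset.sum_filter, Finset.sum_const, smul_eq_mul]
          congr 2
          rw [Nat.card_eq_fintype_card, Fintype.card_subtype]
  rw [key]
  have hZG : Nat.card (Subgroup.center G) * Fintype.card G
      ≤ Fintype.card G * Fintype.card G := by
    have := hZ
    nlinarith [Fintype.card_pos (α := G)]
  have : 4 * ∑ x : G, Nat.card {y : G // x * y = y * x}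
      ≤ 2 * (Fintype.card G * Fintype.card G)
        + 2 * (Nat.card (Subgroup.center G) * Fintype.card G) := by omega
  nlinarith [hZ, Fintype.card_pos (α := G), sq_nonneg (Fintype.card G)]

theorem stmt_16 {G : Type*} [Group G] [Fintype G] (c : G)
    (h : (¬ ∀ a b : G, a * b = b * a) ∨ c ≠ 1) :
    (Nat.card {p : G × G // p.1⁻¹ * p.2⁻¹ * p.1 * p.2 = c} : ℝ) /
      ((Fintype.card G : ℝ) ^ 2) ≤ 3 / 4 := by
  classical
  by_cases hab : ∀ a b : G, a * b = b * a
  · -- abelian case: c ≠ 1, so the set is empty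
    have hc : c ≠ 1 := h.resolve_left (fun hn => hn hab)
    have hempty : IsEmpty {p : G × G // p.1⁻¹ * p.2⁻¹ * p.1 * p.2 = c} := by
      constructor
      rintro ⟨⟨x, y⟩, hp⟩
      apply hc
      rw [← hp]
      simp only
      rw [mul_assoc, hab x y]
      simp [mul_assoc]
    rw [Nat.card_of_isEmpty]
    norm_num
  · -- nonabelian case
    set s : G → G := fun x => if hx : ∃ y : G, x⁻¹ * y⁻¹ * x * y = c then hx.choose else 1
      with hs_def
    have hs : ∀ x y : G, x⁻¹ * y⁻¹ * x * y = c → x⁻¹ * (s x)⁻¹ * x * (s x) = c := by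
      intro x y hy
      have hex : ∃ y : G, x⁻¹ * y⁻¹ * x * y = c := ⟨y, hy⟩
      simp only [hs_def, dif_pos hex]
      exact hex.choose_spec
    set f : {p : G × G // p.1⁻¹ * p.2⁻¹ * p.1 * p.2 = c} →
        {p : G × G // p.1 * p.2 = p.2 * p.1} := fun q =>
      ⟨(q.1.1, q.1.2 * (s q.1.1)⁻¹), by
        obtain ⟨⟨x, y⟩, hq⟩ := q
        simp only
        have hz := hs x y hq
        have h1 : x⁻¹ * y⁻¹ * x * y = x⁻¹ * (s x)⁻¹ * x * (s x) := hq.trans hz.symm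
        have h2 : y⁻¹ * x * y = (s x)⁻¹ * x * (s x) := by
          apply mul_left_cancel (a := x⁻¹)
          simpa [mul_assoc] using h1
        have h3 := congrArg (fun g => y * g * (s x)⁻¹) h2
        simpa [mul_assoc] using h3⟩ with hf_def
    have hinj : Function.Injective f := by
      rintro ⟨⟨x, y⟩, hq⟩ ⟨⟨x', y'⟩, hq'⟩ hfe
      simp only [hf_def, Subtype.mk.injEq, Prod.mk.injEq] at hfe
      obtain ⟨h1, h2⟩ := hfe
      subst h1
      have : y = y' := mul_right_cancel h2
      simp [this]
    have hle : Nat.card {p : G × G // p.1⁻¹ * p.2⁻¹ * p.1 * p.2 = c}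
        ≤ Nat.card {p : G × G // p.1 * p.2 = p.2 * p.1} :=
      Nat.card_le_card_of_injective f hinj
    have hbound := comm_pairs_bound hab
    have hNle : 4 * Nat.card {p : G × G // p.1⁻¹ * p.2⁻¹ * p.1 * p.2 = c}
        ≤ 3 * Fintype.card G ^ 2 := le_trans (by omega) hbound
    have hpos : (0 : ℝ) < (Fintype.card G : ℝ) ^ 2 := by
      positivity
    rw [div_le_div_iff₀ hpos (by norm_num)]
    have : (4 : ℝ) * Nat.card {p : G × G // p.1⁻¹ * p.2⁻¹ * p.1 * p.2 = c}
        ≤ 3 * (Fintype.card G : ℝ) ^ 2 := by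
      exact_mod_cast hNle
    linarith
end

section
/- Let G be a group, g, h ∈ G, and suppose the centralizer C_G(h) has finite index k in G. If the set {x ∈ G : [g, x⁻¹hx] = 1} is k-large in G, then every conjugate of g commutes with every conjugate of h. -/
open Pointwise

theorem stmt_17 {G : Type*} [Group G] (g h : G) (k : ℕ) (hk : 0 < k)
    (hindex : (Subgroup.centralizer {h}).index = k)
    (hlarge : IsKLarge k
      {x : G | g⁻¹ * (x⁻¹ * h * x)⁻¹ * g * (x⁻¹ * h * x) = 1}) :
    ∀ a b : G, (a⁻¹ * g * a) * (b⁻¹ * h * b) = (b⁻¹ * h * b) * (a⁻¹ * g * a) := by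
  set C := Subgroup.centralizer {h} with hC
  have hfin : Nat.card (G ⧸ C) = k := hindex
  have : Finite (G ⧸ C) := Nat.finite_of_card_ne_zero (by omega)
  obtain ⟨e⟩ : Nonempty (G ⧸ C ≃ Fin k) := ⟨Finite.equivFinOfCardEq hfin⟩
  set s : Fin k → G := fun i => (e.symm i).out with hs
  obtain ⟨y, hy⟩ := hlarge s
  simp only [Set.mem_iInter] at hy
  have key : ∀ w : G, g * (w * h * w⁻¹) = (w * h * w⁻¹) * g := by
    intro w
    set i := e (QuotientGroup.mk (y * w)) with hi
    have hmk : (QuotientGroup.mk (y * w) : G ⧸ C) = QuotientGroup.mk (s i) := by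
      simp [hs, hi]
    have hc : (y * w)⁻¹ * s i ∈ C := (QuotientGroup.eq).mp hmk
    set c := (y * w)⁻¹ * s i with hcdef
    have hch : h * c = c * h := Subgroup.mem_centralizer_iff.mp hc h rfl
    have hx := hy i
    rw [Set.mem_smul_set_iff_inv_smul_mem, smul_eq_mul] at hx
    set x := (s i)⁻¹ * y with hxdef
    have hsic : s i = y * w * c := by rw [hcdef]; group
    have hconj : x⁻¹ * h * x = w * h * w⁻¹ := by
      have h1 : x⁻¹ * h * x = w * (c * h * c⁻¹) * w⁻¹ := by
        rw [hxdef, hsic]; group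
      rw [h1, ← hch]; group
    have hx' : g⁻¹ * (w * h * w⁻¹)⁻¹ * g * (w * h * w⁻¹) = 1 := by
      have := hx
      simp only [Set.mem_setOf_eq] at this
      rwa [hconj] at this
    calc g * (w * h * w⁻¹)
        = (w * h * w⁻¹) * g * (g⁻¹ * (w * h * w⁻¹)⁻¹ * g * (w * h * w⁻¹)) := by group
      _ = (w * h * w⁻¹) * g := by rw [hx']; group
  intro a b
  calc (a⁻¹ * g * a) * (b⁻¹ * h * b)
      = a⁻¹ * (g * ((a * b⁻¹) * h * (a * b⁻¹)⁻¹)) * a := by group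
    _ = a⁻¹ * (((a * b⁻¹) * h * (a * b⁻¹)⁻¹) * g) * a := by rw [key (a * b⁻¹)]
    _ = (b⁻¹ * h * b) * (a⁻¹ * g * a) := by group
end

section
/- Let H ≤ G be finite groups and Σ a group of automorphisms of G. If the set {(σ,g) ∈ Σ × H : σ(g) = g} is 4-large in the group Σ × H, then every element of H is fixed by every automorphism in Σ. -/
open Pointwise

theorem stmt_18 {G : Type*} [Group G] [Finite G] (H : Subgroup G)
    (S : Subgroup (MulAut G))
    (h : IsKLarge 4 {p : S × H | (p.1 : MulAut G) (p.2 : G) = (p.2 : G)}) :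
    ∀ (σ : S) (x : H), (σ : MulAut G) (x : G) = (x : G) := by
  intro σ x
  obtain ⟨y, hy⟩ := h ![(1, 1), (σ, 1), (1, x), (σ, x)]
  simp only [Set.mem_iInter] at hy
  have h0 := hy 0
  have h1 := hy 1
  have h2 := hy 2
  have h3 := hy 3
  rw [Set.mem_smul_set_iff_inv_smul_mem] at h0 h1 h2 h3
  simp only [Matrix.cons_val_zero, Matrix.cons_val_one, Matrix.head_cons,
    Matrix.cons_val_two, Matrix.tail_cons, Matrix.cons_val_three,
    Prod.inv_mk, Prod.smul_def, smul_eq_mul, Prod.mk_mul_mk, Prod.fst_mul,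
    Prod.snd_mul, Prod.fst_one, Prod.snd_one, one_mul, inv_one,
    Set.mem_setOf_eq, Submonoid.coe_mul, Subgroup.coe_mul, InvMemClass.coe_inv,
    MulAut.mul_apply, MulAut.inv_apply_self] at h0 h1 h2 h3
  set f := (σ : MulAut G) with hf
  set t := (y.1 : MulAut G) with ht
  set a := (y.2 : G) with ha
  set b := (x : G) with hb
  -- h0 : t a = a
  -- h1 : f⁻¹ (t a) = a
  -- h2 : t (b⁻¹ * a) = b⁻¹ * a
  -- h3 : f⁻¹ (t (b⁻¹ * a)) = b⁻¹ * a
  have hfa : f a = a := by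
    have : f⁻¹ a = a := by rw [h0] at h1; exact h1
    calc f a = f (f⁻¹ a) := by rw [this]
    _ = a := by simp
  have hfba : f (b⁻¹ * a) = b⁻¹ * a := by
    have : f⁻¹ (b⁻¹ * a) = b⁻¹ * a := by rw [h2] at h3; exact h3
    calc f (b⁻¹ * a) = f (f⁻¹ (b⁻¹ * a)) := by rw [this]
    _ = b⁻¹ * a := by simp
  rw [map_mul, map_inv, hfa] at hfba
  have hfb : f b = b := by
    have := mul_right_cancel hfba
    simpa [inv_inj] using this
  simpa using hfb
end

section
/- Let H ≤ G be finite groups and Σ a group of automorphisms of G such that H is not contained in the fixed points of Σ. Then the autocommutativity degree ac(H;Σ) = |{(σ,g) ∈ Σ × H : σ(g) = g}|/(|Σ|·|H|) is at most 3/4. -/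
open Pointwise

theorem stmt_19 {G : Type*} [Group G] [Finite G] (H : Subgroup G)
    (S : Subgroup (MulAut G))
    (h : ∃ (σ : S) (x : H), (σ : MulAut G) (x : G) ≠ (x : G)) :
    (Nat.card {p : S × H // (p.1 : MulAut G) (p.2 : G) = (p.2 : G)} : ℝ) /
      ((Nat.card S : ℝ) * (Nat.card H : ℝ)) ≤ 3 / 4 := by
  classical
  have hcard : ∀ {A : Type _} [Group A] [Finite A] (T : Subgroup A), T ≠ ⊤ →
      2 * Nat.card T ≤ Nat.card A := by
    intro A _ _ T hT
    have h1 : Nat.card T * T.index = Nat.card A := Subgroup.card_mul_index T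
    have h0 : T.index ≠ 0 := Subgroup.index_ne_zero_of_finite
    have h1' : T.index ≠ 1 := fun e => hT (Subgroup.index_eq_one.mp e)
    have h2 : 2 ≤ T.index := by omega
    calc 2 * Nat.card T ≤ T.index * Nat.card T :=
          Nat.mul_le_mul_right _ h2
      _ = Nat.card A := by rw [mul_comm]; exact h1
  haveI : Fintype G := Fintype.ofFinite G
  haveI : Finite (MulAut G) :=
    Finite.of_injective (fun e : MulAut G => (e : G → G)) DFunLike.coe_injective
  haveI : Fintype (MulAut G) := Fintype.ofFinite _
  haveI : Fintype S := Fintype.ofFinite S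
  haveI : Fintype H := Fintype.ofFinite H
  -- stabilizer of x in S
  set T : H → Subgroup S := fun x =>
    { carrier := {σ : S | (σ : MulAut G) (x : G) = (x : G)}
      one_mem' := by simp
      mul_mem' := by
        intro a b ha hb
        simp only [Set.mem_setOf_eq] at *
        simp [Subgroup.coe_mul, MulAut.mul_apply, hb, ha]
      inv_mem' := by
        intro a ha
        simp only [Set.mem_setOf_eq] at *
        have : (a⁻¹ : S).1 ((a : MulAut G) (x : G)) = (a⁻¹ : S).1 (x : G) := by
          rw [ha]
        simpa using this.symm } with hT'
  -- fixed subgroup K in H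
  set K : Subgroup H :=
    { carrier := {x : H | ∀ σ : S, (σ : MulAut G) (x : G) = (x : G)}
      one_mem' := by intro σ; simp
      mul_mem' := by
        intro a b ha hb σ
        simp only [Set.mem_setOf_eq] at *
        simp [map_mul, ha σ, hb σ]
      inv_mem' := by
        intro a ha σ
        simp only [Set.mem_setOf_eq] at *
        simp [map_inv, ha σ] } with hK'
  have hKtop : K ≠ ⊤ := by
    obtain ⟨σ, x, hx⟩ := h
    intro e
    have hxK : x ∈ K := by rw [e]; trivial
    exact hx (hxK σ)
  have hKcard : 2 * Nat.card K ≤ Nat.card H := hcard K hKtop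
  -- count via sum
  have key : Nat.card {p : S × H // (p.1 : MulAut G) (p.2 : G) = (p.2 : G)} =
      ∑ x : H, Nat.card (T x) := by
    have e : {p : S × H // (p.1 : MulAut G) (p.2 : G) = (p.2 : G)} ≃
        Σ x : H, (T x) :=
      { toFun := fun p => ⟨p.1.2, ⟨p.1.1, p.2⟩⟩
        invFun := fun q => ⟨(q.2.1, q.1), q.2.2⟩
        left_inv := fun p => rfl
        right_inv := fun q => rfl }
    rw [Nat.card_congr e]
    simp only [Nat.card_eq_fintype_card, Fintype.card_sigma]
  have hbound1 : ∀ x : H, Nat.card (T x) ≤ Nat.card S := fun x =>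
    Subgroup.card_le_card_group (T x)
  have hbound2 : ∀ x : H, x ∉ K → 2 * Nat.card (T x) ≤ Nat.card S := by
    intro x hx
    refine hcard (T x) ?_
    intro e
    apply hx
    intro σ
    have : σ ∈ T x := by rw [e]; trivial
    exact this
  -- main nat inequality
  have main : 4 * Nat.card {p : S × H // (p.1 : MulAut G) (p.2 : G) = (p.2 : G)} ≤
      3 * (Nat.card S * Nat.card H) := by
    rw [key, Finset.mul_sum]
    have split := Finset.sum_filter_add_sum_filter_not Finset.univ
      (fun x : H => x ∈ K) (fun x : H => 4 * Nat.card (T x))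
    rw [← split]
    have hKsize : (Finset.univ.filter (fun x : H => x ∈ K)).card = Nat.card K := by
      rw [Nat.card_eq_fintype_card, Fintype.card_subtype]
    have hsum1 : ∑ x ∈ Finset.univ.filter (fun x : H => x ∈ K), 4 * Nat.card (T x)
        ≤ (Finset.univ.filter (fun x : H => x ∈ K)).card * (4 * Nat.card S) := by
      apply Finset.sum_le_card_nsmul
      intro x _
      exact Nat.mul_le_mul_left 4 (hbound1 x)
    have hsum2 : ∑ x ∈ Finset.univ.filter (fun x : H => ¬ x ∈ K), 4 * Nat.card (T x)
        ≤ (Finset.univ.filter (fun x : H => ¬ x ∈ K)).card * (2 * Nat.card S) := by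
      apply Finset.sum_le_card_nsmul
      intro x hx
      rw [Finset.mem_filter] at hx
      have := hbound2 x hx.2
      omega
    have hcards : (Finset.univ.filter (fun x : H => x ∈ K)).card +
        (Finset.univ.filter (fun x : H => ¬ x ∈ K)).card = Nat.card H := by
      rw [Finset.card_filter_add_card_filter_not, Nat.card_eq_fintype_card]
      rfl
    set a := (Finset.univ.filter (fun x : H => x ∈ K)).card
    set b := (Finset.univ.filter (fun x : H => ¬ x ∈ K)).card
    have : 2 * a ≤ Nat.card H := hKsize ▸ hKcard
    nlinarith [hsum1, hsum2, hcards, this, Nat.card_pos (α := S)]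
  -- convert to reals
  have hS : (0 : ℝ) < Nat.card S := by exact_mod_cast Nat.card_pos
  have hH : (0 : ℝ) < Nat.card H := by exact_mod_cast Nat.card_pos
  rw [div_le_div_iff₀ (by positivity) (by norm_num)]
  have := (Nat.cast_le (α := ℝ)).mpr main
  push_cast at this
  nlinarith [this]
end
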